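/- arXiv:1905.10497 — 2 statements merged into one kernel-verified Lean document; each statement's English description precedes it below -/
import Mathlib

section
/- Let E be a real Banach space, let f : E → ℝ be twice continuously differentiable with f(x) ≥ 0 for every x, let q be a natural number with q ≥ 1, let w ∈ E, and suppose the operator norm of the second derivative of f at w satisfies ‖D²f(w)‖ ≤ L. Then the second derivative of the function g(x) = (1/(q+1)) · f(x)^{q+1} at w satisfies ‖D²g(w)‖ ≤ L · f(w)^q + q · f(w)^{q-1} · ‖Df(w)‖², where Df(w) denotes the (Fréchet) derivative of f at w. -/
/-! Since `D g = f^q • D f`, the product rule gives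
`D² g(w) = f(w)^q • D² f(w) + (q f(w)^{q-1} • D f(w)).smulRight (D f(w))`, and the bound is the
triangle inequality together with `‖c.smulRight c'‖ = ‖c‖ ‖c'‖`, the scalar coefficients being
their own norms because `f ≥ 0`. -/

theorem norm_iteratedFDeriv_two {𝕜 E F : Type*} [NontriviallyNormedField 𝕜]
    [NormedAddCommGroup E] [NormedSpace 𝕜 E] [NormedAddCommGroup F] [NormedSpace 𝕜 F]
    (f : E → F) (x : E) :
    ‖iteratedFDeriv 𝕜 2 f x‖ = ‖fderiv 𝕜 (fderiv 𝕜 f) x‖ := by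
  rw [← norm_iteratedFDeriv_fderiv, norm_iteratedFDeriv_one]

section

variable {E : Type*} [NormedAddCommGroup E] [NormedSpace ℝ E]

theorem HasFDerivAt.inv_succ_mul_pow_succ {f : E → ℝ} {f' : StrongDual ℝ E} {x : E} (q : ℕ)
    (hf : HasFDerivAt f f' x) :
    HasFDerivAt (fun y => (1 / (q + 1 : ℝ)) * f y ^ (q + 1)) (f x ^ q • f') x := by
  refine (((hasDerivAt_pow (q + 1) (f x)).comp_hasFDerivAt x hf).const_smul
    (1 / (q + 1 : ℝ))).congr_fderiv ?_
  rw [smul_smul]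
  congr 1
  field_simp
  push_cast
  ring

theorem fderiv_fderiv_inv_succ_mul_pow_succ {f : E → ℝ} {w : E} (q : ℕ)
    (hf : Differentiable ℝ f) (hf' : DifferentiableAt ℝ (fderiv ℝ f) w) :
    fderiv ℝ (fderiv ℝ fun x => (1 / (q + 1 : ℝ)) * f x ^ (q + 1)) w
      = f w ^ q • fderiv ℝ (fderiv ℝ f) w
        + ((q * f w ^ (q - 1)) • fderiv ℝ f w).smulRight (fderiv ℝ f w) := by
  have hDg : fderiv ℝ (fun x => (1 / (q + 1 : ℝ)) * f x ^ (q + 1))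
      = fun x => f x ^ q • fderiv ℝ f x :=
    funext fun x => ((hf x).hasFDerivAt.inv_succ_mul_pow_succ q).fderiv
  rw [hDg]
  exact (((hasDerivAt_pow q (f w)).comp_hasFDerivAt w (hf w).hasFDerivAt).smul
    hf'.hasFDerivAt).fderiv

end

theorem qffl_hessian_bound_nat_general
    {E : Type*} [NormedAddCommGroup E] [NormedSpace ℝ E]
    (f : E → ℝ) (hf : ContDiff ℝ 2 f) (hf0 : ∀ x, 0 ≤ f x)
    (q : ℕ) (w : E) (L : ℝ)
    (hL : ‖iteratedFDeriv ℝ 2 f w‖ ≤ L) :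
    ‖iteratedFDeriv ℝ 2 (fun x => (1 / (q + 1 : ℝ)) * f x ^ (q + 1)) w‖
      ≤ L * f w ^ q + q * f w ^ (q - 1) * ‖fderiv ℝ f w‖ ^ 2 := by
  have hfw : 0 ≤ f w := hf0 w
  have hf' : DifferentiableAt ℝ (fderiv ℝ f) w :=
    (hf.fderiv_right (m := 1) le_rfl).differentiable one_ne_zero w
  rw [norm_iteratedFDeriv_two] at hL ⊢
  rw [fderiv_fderiv_inv_succ_mul_pow_succ q (hf.differentiable two_ne_zero) hf']
  calc _ ≤ ‖f w ^ q • fderiv ℝ (fderiv ℝ f) w‖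
          + ‖((q * f w ^ (q - 1)) • fderiv ℝ f w).smulRight (fderiv ℝ f w)‖ :=
        ContinuousLinearMap.opNorm_add_le _ _
    _ ≤ f w ^ q * ‖fderiv ℝ (fderiv ℝ f) w‖ + q * f w ^ (q - 1) * ‖fderiv ℝ f w‖ ^ 2 := by
        gcongr
        · simpa [abs_of_nonneg hfw] using ContinuousLinearMap.opNorm_smul_le (f w ^ q) _
        · rw [ContinuousLinearMap.norm_smulRight_apply, norm_smul,
            Real.norm_of_nonneg (by positivity), mul_assoc, sq]
    _ ≤ L * f w ^ q + q * f w ^ (q - 1) * ‖fderiv ℝ f w‖ ^ 2 := by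
        rw [mul_comm L]
        gcongr

/-- Lemma 1 of the paper (integer-exponent form): if `f : E → ℝ` is a nonnegative
`C²` function on a real Banach space whose second derivative at `w` has operator norm
at most `L`, then the second derivative of `g = (1/(q+1)) · f^{q+1}` at `w` has operator
norm at most `L·f(w)^q + q·f(w)^{q-1}·‖Df(w)‖²`. -/
theorem qffl_hessian_bound_nat
    {E : Type*} [NormedAddCommGroup E] [NormedSpace ℝ E] [CompleteSpace E]
    (f : E → ℝ) (hf : ContDiff ℝ 2 f) (hf0 : ∀ x, 0 ≤ f x)
    (q : ℕ) (hq : 1 ≤ q) (w : E) (L : ℝ)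
    (hL : ‖iteratedFDeriv ℝ 2 f w‖ ≤ L) :
    ‖iteratedFDeriv ℝ 2 (fun x => (1 / (q + 1 : ℝ)) * f x ^ (q + 1)) w‖
      ≤ L * f w ^ q + q * f w ^ (q - 1) * ‖fderiv ℝ f w‖ ^ 2 :=
  qffl_hessian_bound_nat_general f hf hf0 q w L hL
end

section
/- Let E be a real Banach space, let f : E → ℝ be twice continuously differentiable with f(x) ≥ 0 for all x, and suppose ‖D²f(x)‖ ≤ L for all x. Let q be a natural number with q ≥ 1, let s ⊆ E be a convex set, and suppose there are constants M, G ≥ 0 such that f(x) ≤ M and ‖Df(x)‖ ≤ G for all x ∈ s. Then the derivative map x ↦ D((1/(q+1))·f^{q+1})(x) is Lipschitz on s with Lipschitz constant L·M^q + q·M^{q-1}·G². -/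
/-!
The gradient of `g = f ^ (q + 1) / (q + 1)` is `f ^ q • Df`, whose derivative is
`f ^ q • D²f + q f ^ (q - 1) Df ⊗ Df`. On `s` this has norm at most `L M^q + q M^(q-1) G²`,
and the mean value inequality on the convex set `s` turns that bound into the Lipschitz estimate.
-/

open ContinuousLinearMap

theorem norm_fderiv_fderiv_eq_norm_iteratedFDeriv_two {𝕜 E F : Type*} [NontriviallyNormedField 𝕜]
    [NormedAddCommGroup E] [NormedSpace 𝕜 E] [NormedAddCommGroup F] [NormedSpace 𝕜 F]
    (f : E → F) (x : E) :
    ‖fderiv 𝕜 (fderiv 𝕜 f) x‖ = ‖iteratedFDeriv 𝕜 2 f x‖ := by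
  rw [← norm_iteratedFDeriv_one]
  exact norm_iteratedFDeriv_fderiv

section

variable {E : Type*} [NormedAddCommGroup E] [NormedSpace ℝ E]

theorem HasFDerivAt.div_succ_mul_pow {f : E → ℝ} {f' : E →L[ℝ] ℝ} {x : E}
    (hf : HasFDerivAt f f' x) (n : ℕ) :
    HasFDerivAt (fun z => (1 / (n + 1 : ℝ)) * f z ^ (n + 1)) (f x ^ n • f') x := by
  refine (((hasDerivAt_pow (n + 1) (f x)).comp_hasFDerivAt x hf).const_mul
    (1 / (n + 1 : ℝ))).congr_fderiv ?_
  rw [smul_smul, Nat.add_sub_cancel]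
  congr 1
  push_cast
  field_simp

theorem hasFDerivAt_pow_smul_fderiv {f : E → ℝ} {x : E} (hf : DifferentiableAt ℝ f x)
    (hf' : DifferentiableAt ℝ (fderiv ℝ f) x) (q : ℕ) :
    HasFDerivAt (fun z => f z ^ q • fderiv ℝ f z)
      (f x ^ q • fderiv ℝ (fderiv ℝ f) x
        + (((q : ℝ) * f x ^ (q - 1)) • fderiv ℝ f x).smulRight (fderiv ℝ f x)) x :=
  ((hasDerivAt_pow q (f x)).comp_hasFDerivAt x hf.hasFDerivAt).smul hf'.hasFDerivAt

theorem norm_pow_smul_add_smulRight_le {a M L G : ℝ} (q : ℕ) {A : E →L[ℝ] E →L[ℝ] ℝ}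
    {φ : E →L[ℝ] ℝ} (ha : 0 ≤ a) (haM : a ≤ M) (hA : ‖A‖ ≤ L) (hφ : ‖φ‖ ≤ G) :
    ‖a ^ q • A + (((q : ℝ) * a ^ (q - 1)) • φ).smulRight φ‖
      ≤ L * M ^ q + q * M ^ (q - 1) * G ^ 2 := by
  have hM : 0 ≤ M := ha.trans haM
  have hG : 0 ≤ G := (norm_nonneg φ).trans hφ
  calc _ ≤ ‖a ^ q • A‖ + ‖(((q : ℝ) * a ^ (q - 1)) • φ).smulRight φ‖ :=
        norm_add_le (E := E →L[ℝ] E →L[ℝ] ℝ) _ _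
    _ ≤ ‖a ^ q‖ * ‖A‖ + ‖(q : ℝ) * a ^ (q - 1)‖ * ‖φ‖ * ‖φ‖ := by
        rw [norm_smulRight_apply]
        gcongr <;> exact opNorm_smul_le _ _
    _ = a ^ q * ‖A‖ + q * a ^ (q - 1) * ‖φ‖ * ‖φ‖ := by
        rw [Real.norm_of_nonneg (by positivity), Real.norm_of_nonneg (by positivity)]
    _ ≤ M ^ q * L + q * M ^ (q - 1) * G * G := by gcongr
    _ = L * M ^ q + q * M ^ (q - 1) * G ^ 2 := by ring

end

theorem qffl_gradient_lipschitzOn_general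
    {E : Type*} [NormedAddCommGroup E] [NormedSpace ℝ E]
    (f : E → ℝ) (hf : ContDiff ℝ 2 f) (hf0 : ∀ x, 0 ≤ f x)
    (L : ℝ) (hL : ∀ x, ‖iteratedFDeriv ℝ 2 f x‖ ≤ L)
    (q : ℕ)
    (s : Set E) (hs : Convex ℝ s)
    (M G : ℝ)
    (hfM : ∀ x ∈ s, f x ≤ M) (hfG : ∀ x ∈ s, ‖fderiv ℝ f x‖ ≤ G) :
    ∀ x ∈ s, ∀ y ∈ s,
      ‖fderiv ℝ (fun z => (1 / (q + 1 : ℝ)) * f z ^ (q + 1)) x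
          - fderiv ℝ (fun z => (1 / (q + 1 : ℝ)) * f z ^ (q + 1)) y‖
        ≤ (L * M ^ q + q * M ^ (q - 1) * G ^ 2) * ‖x - y‖ := by
  have hdiff : Differentiable ℝ f := hf.differentiable (by norm_num)
  have hdiff' : Differentiable ℝ (fderiv ℝ f) :=
    (hf.fderiv_right (m := 1) (by norm_num)).differentiable (by norm_num)
  have hgrad : ∀ z, fderiv ℝ (fun z => (1 / (q + 1 : ℝ)) * f z ^ (q + 1)) z
      = f z ^ q • fderiv ℝ f z :=
    fun z => ((hdiff z).hasFDerivAt.div_succ_mul_pow q).fderiv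
  intro x hx y hy
  rw [hgrad, hgrad]
  refine hs.norm_image_sub_le_of_norm_hasFDerivWithin_le
    (fun z _ => (hasFDerivAt_pow_smul_fderiv (hdiff z) (hdiff' z) q).hasFDerivWithinAt)
    (fun z hz => ?_) hy hx
  exact norm_pow_smul_add_smulRight_le q (hf0 z) (hfM z hz)
    ((norm_fderiv_fderiv_eq_norm_iteratedFDeriv_two f z).trans_le (hL z)) (hfG z hz)

/-- The 'local Lipschitz constant of the gradient' reading of Lemma 1 of the paper:
if `f : E → ℝ` is a nonnegative `C²` function with `‖D²f(x)‖ ≤ L` everywhere,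
`q ≥ 1` is a natural number, and on a convex set `s` we have `f ≤ M` and
`‖Df‖ ≤ G` (with `M, G ≥ 0`), then the gradient of `g = (1/(q+1))·f^{q+1}` is
Lipschitz on `s` with constant `L·M^q + q·M^{q-1}·G²`. -/
theorem qffl_gradient_lipschitzOn
    {E : Type*} [NormedAddCommGroup E] [NormedSpace ℝ E] [CompleteSpace E]
    (f : E → ℝ) (hf : ContDiff ℝ 2 f) (hf0 : ∀ x, 0 ≤ f x)
    (L : ℝ) (hL : ∀ x, ‖iteratedFDeriv ℝ 2 f x‖ ≤ L)
    (q : ℕ) (hq : 1 ≤ q)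
    (s : Set E) (hs : Convex ℝ s)
    (M G : ℝ) (hM : 0 ≤ M) (hG : 0 ≤ G)
    (hfM : ∀ x ∈ s, f x ≤ M) (hfG : ∀ x ∈ s, ‖fderiv ℝ f x‖ ≤ G) :
    ∀ x ∈ s, ∀ y ∈ s,
      ‖fderiv ℝ (fun z => (1 / (q + 1 : ℝ)) * f z ^ (q + 1)) x
          - fderiv ℝ (fun z => (1 / (q + 1 : ℝ)) * f z ^ (q + 1)) y‖
        ≤ (L * M ^ q + q * M ^ (q - 1) * G ^ 2) * ‖x - y‖ :=
  qffl_gradient_lipschitzOn_general f hf hf0 L hL q s hs M G hfM hfG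
end
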